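/- arXiv:2407.10750 — 2 statements merged into one kernel-verified Lean document; each statement's English description precedes it below -/
import Mathlib

section
/- For real numbers a, Q, M with a^2 + Q^2 < M^2 and M > 0, the cubic polynomial T(r) = r^3 - 3Mr^2 + (a^2 + 2Q^2)r + Ma^2 has a real root r_P satisfying r_P > r_+, where r_+ = M + sqrt(M^2 - a^2 - Q^2). -/
theorem trapping_root_exists (a Q M : ℝ) (hM : 0 < M) (h : a^2 + Q^2 < M^2) :
    ∃ rP : ℝ, rP^3 - 3*M*rP^2 + (a^2 + 2*Q^2)*rP + M*a^2 = 0 ∧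
      M + Real.sqrt (M^2 - a^2 - Q^2) < rP := by
  set s := Real.sqrt (M^2 - a^2 - Q^2) with hs
  have hpos : 0 < M^2 - a^2 - Q^2 := by nlinarith
  have hs2 : s^2 = M^2 - a^2 - Q^2 := Real.sq_sqrt hpos.le
  have hsp : 0 < s := Real.sqrt_pos.mpr hpos
  have hsM : s ≤ M := by nlinarith
  set f : ℝ → ℝ := fun r => r^3 - 3*M*r^2 + (a^2 + 2*Q^2)*r + M*a^2 with hf
  have hcont : ContinuousOn f (Set.Icc (M + s) (4*M)) := by
    apply Continuous.continuousOn; continuity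
  have hle : M + s ≤ 4*M := by nlinarith
  have hneg : f (M + s) < 0 := by
    simp only [hf]
    nlinarith [sq_nonneg a, sq_nonneg Q, mul_pos hM hsp]
  have hposf : 0 < f (4*M) := by
    simp only [hf]
    nlinarith [sq_nonneg a, sq_nonneg Q]
  have := intermediate_value_Ioo hle hcont
  have hmem : (0:ℝ) ∈ Set.Ioo (f (M + s)) (f (4*M)) := ⟨hneg, hposf⟩
  obtain ⟨c, hc, hfc⟩ := this hmem
  exact ⟨c, hfc, hc.1⟩
end

section
/- Let M > 0, |Q| < M, and define Υ(r) = 1 - 2M/r + Q^2/r^2, V_1(r) = (1/r^2)(1 - 2M/r + 6Q^2/r^2), and u the interpolating multiplier with r_P the trapping radius. Then -（1/2)·(u/r^2)·∂_r(Υ V_1) = (1/r^3)·(1 - r_P/r)·(1 + r_P/r + (Q^2/M^2)r_P^2/r^2)·(1 - 6M/r + 8M^2/r^2 + 14Q^2/r^2 - 35Q^2M/r^3 + 18Q^4/r^4) for all r > 0 with r ≠ 0 (interpreting both sides as rational functions). -/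
/-!
Dividing out `r - r_P` factors `u / r²` as `(1 - r_P/r)(1 + r_P/r + (Q²/M²) r_P²/r²)`, and expanding
`Υ V₁` in powers of `1/r` gives `-(1/2) ∂_r(Υ V₁) = r⁻³ (1 - 6M/r + …)`.
-/

theorem hasDerivAt_const_div_pow (c : ℝ) (n : ℕ) {r : ℝ} (hr : r ≠ 0) :
    HasDerivAt (fun s : ℝ => c / s ^ n) (-(n * c) / r ^ (n + 1)) r := by
  have h := ((hasDerivAt_pow n r).inv (pow_ne_zero n hr)).const_mul c
  simp only [← div_eq_mul_inv, Pi.inv_apply] at h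
  rcases n with _ | n
  · simpa using h
  · refine h.congr_deriv ?_
    rw [Nat.add_sub_cancel]
    field_simp
    ring

theorem upsilon_mul_V1_eq (M Q s : ℝ) :
    (1 - 2*M/s + Q^2/s^2) * ((1/s^2)*(1 - 2*M/s + 6*Q^2/s^2))
      = 1/s^2 - 4*M/s^3 + (4*M^2 + 7*Q^2)/s^4 - 14*M*Q^2/s^5 + 6*Q^4/s^6 := by
  ring

theorem hasDerivAt_upsilon_mul_V1 (M Q : ℝ) {r : ℝ} (hr : r ≠ 0) :
    HasDerivAt (fun s : ℝ => (1 - 2*M/s + Q^2/s^2) * ((1/s^2)*(1 - 2*M/s + 6*Q^2/s^2)))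
      (-2/r^3 * (1 - 6*M/r + 8*M^2/r^2 + 14*Q^2/r^2 - 35*Q^2*M/r^3 + 18*Q^4/r^4)) r := by
  simp only [upsilon_mul_V1_eq]
  refine (((((hasDerivAt_const_div_pow 1 2 hr).sub (hasDerivAt_const_div_pow (4*M) 3 hr)).add
    (hasDerivAt_const_div_pow (4*M^2 + 7*Q^2) 4 hr)).sub
    (hasDerivAt_const_div_pow (14*M*Q^2) 5 hr)).add (hasDerivAt_const_div_pow (6*Q^4) 6 hr)).congr_deriv ?_
  push_cast
  ring

theorem interpolatingMultiplier_div_sq_eq (a t : ℝ) {r : ℝ} (hr : r ≠ 0) :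
    ((1 - a)*(r^2 - t^2) + a*(r^3 - t^3)/r) / r^2 = (1 - t/r) * (1 + t/r + a*t^2/r^2) := by
  field_simp
  ring

theorem potential_V1_term_identity_general (M Q : ℝ)
    (r : ℝ) (hr : 0 < r) :
    -(1/2) *
      (((1 - Q^2/M^2)*(r^2 - ((3*M + Real.sqrt (9*M^2 - 8*Q^2))/2)^2)
          + (Q^2/M^2)*(r^3 - ((3*M + Real.sqrt (9*M^2 - 8*Q^2))/2)^3)/r) / r^2) *
      deriv (fun s : ℝ =>
        (1 - 2*M/s + Q^2/s^2) * ((1/s^2)*(1 - 2*M/s + 6*Q^2/s^2))) r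
    = (1/r^3) * (1 - ((3*M + Real.sqrt (9*M^2 - 8*Q^2))/2)/r)
        * (1 + ((3*M + Real.sqrt (9*M^2 - 8*Q^2))/2)/r
            + (Q^2/M^2)*((3*M + Real.sqrt (9*M^2 - 8*Q^2))/2)^2/r^2)
        * (1 - 6*M/r + 8*M^2/r^2 + 14*Q^2/r^2 - 35*Q^2*M/r^3 + 18*Q^4/r^4) := by
  rw [(hasDerivAt_upsilon_mul_V1 M Q hr.ne').deriv, interpolatingMultiplier_div_sq_eq _ _ hr.ne']
  ring

theorem potential_V1_term_identity (M Q : ℝ) (hM : 0 < M) (hQ : |Q| < M)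
    (r : ℝ) (hr : 0 < r) :
    -(1/2) *
      (((1 - Q^2/M^2)*(r^2 - ((3*M + Real.sqrt (9*M^2 - 8*Q^2))/2)^2)
          + (Q^2/M^2)*(r^3 - ((3*M + Real.sqrt (9*M^2 - 8*Q^2))/2)^3)/r) / r^2) *
      deriv (fun s : ℝ =>
        (1 - 2*M/s + Q^2/s^2) * ((1/s^2)*(1 - 2*M/s + 6*Q^2/s^2))) r
    = (1/r^3) * (1 - ((3*M + Real.sqrt (9*M^2 - 8*Q^2))/2)/r)
        * (1 + ((3*M + Real.sqrt (9*M^2 - 8*Q^2))/2)/r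
            + (Q^2/M^2)*((3*M + Real.sqrt (9*M^2 - 8*Q^2))/2)^2/r^2)
        * (1 - 6*M/r + 8*M^2/r^2 + 14*Q^2/r^2 - 35*Q^2*M/r^3 + 18*Q^4/r^4) :=
  potential_V1_term_identity_general M Q r hr
end
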